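/- Let G be finite, f : 2^G → ℝ monotone submodular with f(∅) = 0, and let X_t be the set built by the greedy algorithm that, for t = 1,…,s, adds an element maximizing the marginal gain f(X ∪ {j}) − f(X). Then for each t ≤ s, f(X_t) ≥ (1 − (1 − 1/s)^t) · max_{|S| ≤ s} f(S); in particular f(X_s) ≥ (1 − 1/e) · max_{|S| ≤ s} f(S). -/

import Mathlib

/-!
Submodularity gives diminishing returns, so the gain of any set `S` over the current greedy set
`A` is at most the sum of the single-element gains over `A`, hence at most `#S ≤ s` times the
greedy gain. Thus each greedy step closes at least a `1 / s` fraction of the gap `f S - f A`,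
the gap after `t` steps is at most `(1 - 1 / s) ^ t * f S`, and `(1 - 1 / s) ^ s ≤ exp (-1)`.
-/

open Finset

section Submodular

variable {α β : Type*} [DecidableEq α] [AddCommGroup β] [PartialOrder β] [IsOrderedAddMonoid β]
  {f : Finset α → β}

theorem insert_sub_le_insert_sub_of_subset (hmono : Monotone f)
    (hsub : ∀ A B : Finset α, f A + f B ≥ f (A ∪ B) + f (A ∩ B))
    {A B : Finset α} (hBA : B ⊆ A) (a : α) :
    f (insert a A) - f A ≤ f (insert a B) - f B := by
  by_cases ha : a ∈ A
  · rw [insert_eq_of_mem ha, sub_self, sub_nonneg]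
    exact hmono (subset_insert a B)
  · have h := hsub (insert a B) A
    rw [insert_union, union_eq_right.mpr hBA, insert_inter_of_notMem ha,
      inter_eq_left.mpr hBA] at h
    exact sub_le_sub_iff.mpr h

theorem le_add_sum_insert_sub (hmono : Monotone f)
    (hsub : ∀ A B : Finset α, f A + f B ≥ f (A ∪ B) + f (A ∩ B)) (A S : Finset α) :
    f (A ∪ S) ≤ f A + ∑ j ∈ S, (f (insert j A) - f A) := by
  induction S using Finset.induction_on with
  | empty => simp
  | insert a S ha ih =>
    rw [union_insert, sum_insert ha, ← sub_add_cancel (f (insert a (A ∪ S))) (f (A ∪ S)),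
      add_left_comm]
    exact add_le_add
      (insert_sub_le_insert_sub_of_subset hmono hsub subset_union_left a) ih

theorem sub_le_card_nsmul_of_forall_insert_sub_le (hmono : Monotone f)
    (hsub : ∀ A B : Finset α, f A + f B ≥ f (A ∪ B) + f (A ∩ B)) {A S : Finset α} {j : α}
    (hj : ∀ j', f (insert j' A) - f A ≤ f (insert j A) - f A) :
    f S - f A ≤ #S • (f (insert j A) - f A) := calc
  f S - f A ≤ f (A ∪ S) - f A := sub_le_sub_right (hmono subset_union_right) _
  _ ≤ ∑ j' ∈ S, (f (insert j' A) - f A) :=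
    sub_le_iff_le_add'.mpr (le_add_sum_insert_sub hmono hsub A S)
  _ ≤ #S • (f (insert j A) - f A) := sum_le_card_nsmul S _ _ fun j' _ => hj j'

end Submodular

section Greedy

variable {α : Type*} [DecidableEq α] {f : Finset α → ℝ}

theorem greedy_gap_step (hmono : Monotone f)
    (hsub : ∀ A B : Finset α, f A + f B ≥ f (A ∪ B) + f (A ∩ B))
    {A S : Finset α} {s : ℕ} (hs : 0 < s) (hS : #S ≤ s) {j : α}
    (hj : ∀ j', f (insert j' A) - f A ≤ f (insert j A) - f A) :
    f S - f (insert j A) ≤ (1 - 1 / (s : ℝ)) * (f S - f A) := by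
  have hgain : 0 ≤ f (insert j A) - f A := sub_nonneg.mpr (hmono (subset_insert j A))
  have hgap : f S - f A ≤ s * (f (insert j A) - f A) := calc
    f S - f A ≤ #S * (f (insert j A) - f A) := by
      simpa only [nsmul_eq_mul] using sub_le_card_nsmul_of_forall_insert_sub_le hmono hsub hj
    _ ≤ s * (f (insert j A) - f A) :=
      mul_le_mul_of_nonneg_right (by exact_mod_cast hS) hgain
  have hgap' : (f S - f A) / s ≤ f (insert j A) - f A :=
    (div_le_iff₀' (by exact_mod_cast hs)).mpr hgap
  have hexpand : (1 - 1 / (s : ℝ)) * (f S - f A) = (f S - f A) - (f S - f A) / s := by ring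
  linarith

theorem one_sub_pow_mul_le_greedy (hmono : Monotone f)
    (hsub : ∀ A B : Finset α, f A + f B ≥ f (A ∪ B) + f (A ∩ B)) (hf0 : f ∅ = 0)
    {s : ℕ} {X : ℕ → Finset α} (hX0 : X 0 = ∅)
    (hgreedy : ∀ t < s, ∃ j : α, X (t + 1) = insert j (X t) ∧
      ∀ j' : α, f (insert j' (X t)) - f (X t) ≤ f (insert j (X t)) - f (X t))
    {t : ℕ} (ht : t ≤ s) {S : Finset α} (hS : #S ≤ s) :
    (1 - (1 - 1 / (s : ℝ)) ^ t) * f S ≤ f (X t) := by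
  have hc : 0 ≤ 1 - 1 / (s : ℝ) :=
    sub_nonneg.mpr (by simpa only [one_div] using Nat.cast_inv_le_one s)
  have hgap := le_geom (u := fun t => f S - f (X t)) hc t fun k hk => by
    obtain ⟨j, hXk, hj⟩ := hgreedy k (hk.trans_le ht)
    simp only [hXk]
    exact greedy_gap_step hmono hsub (by omega) hS hj
  simp only [hX0, hf0, sub_zero] at hgap
  linarith

end Greedy

theorem one_sub_inv_exp_le_one_sub_one_sub_div_pow {s : ℕ} (hs : s ≠ 0) :
    1 - 1 / Real.exp 1 ≤ 1 - (1 - 1 / (s : ℝ)) ^ s := by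
  have h := Real.one_sub_div_pow_le_exp_neg (n := s) (t := 1)
    (by exact_mod_cast Nat.one_le_iff_ne_zero.mpr hs)
  rw [Real.exp_neg, ← one_div] at h
  linarith

theorem greedy_cardinality_guarantee_general
    {G : Type*} [DecidableEq G] (f : Finset G → ℝ)
    (hmono : ∀ A B : Finset G, A ⊆ B → f A ≤ f B)
    (hsub : ∀ A B : Finset G, f A + f B ≥ f (A ∪ B) + f (A ∩ B))
    (hf0 : f ∅ = 0)
    (s : ℕ) (X : ℕ → Finset G) (hX0 : X 0 = ∅)
    (hgreedy : ∀ t < s, ∃ j : G, X (t + 1) = insert j (X t) ∧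
      ∀ j' : G, f (insert j' (X t)) - f (X t) ≤ f (insert j (X t)) - f (X t)) :
    (∀ t ≤ s, ∀ S : Finset G, S.card ≤ s →
      (1 - (1 - 1 / (s : ℝ)) ^ t) * f S ≤ f (X t)) ∧
    (∀ S : Finset G, S.card ≤ s →
      (1 - 1 / Real.exp 1) * f S ≤ f (X s)) := by
  have hmono' : Monotone f := fun A B hAB => hmono A B hAB
  refine ⟨fun t ht S hS => one_sub_pow_mul_le_greedy hmono' hsub hf0 hX0 hgreedy ht hS,
    fun S hS => ?_⟩
  rcases eq_or_ne s 0 with rfl | hs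
  · simp [card_eq_zero.mp (Nat.le_zero.mp hS), hf0, hX0]
  have hfS : 0 ≤ f S := hf0 ▸ hmono' (empty_subset S)
  calc (1 - 1 / Real.exp 1) * f S ≤ (1 - (1 - 1 / (s : ℝ)) ^ s) * f S :=
        mul_le_mul_of_nonneg_right (one_sub_inv_exp_le_one_sub_one_sub_div_pow hs) hfS
    _ ≤ f (X s) := one_sub_pow_mul_le_greedy hmono' hsub hf0 hX0 hgreedy le_rfl hS

theorem greedy_cardinality_guarantee
    {G : Type*} [DecidableEq G] [Fintype G] (f : Finset G → ℝ)
    (hmono : ∀ A B : Finset G, A ⊆ B → f A ≤ f B)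
    (hsub : ∀ A B : Finset G, f A + f B ≥ f (A ∪ B) + f (A ∩ B))
    (hf0 : f ∅ = 0)
    (s : ℕ) (X : ℕ → Finset G) (hX0 : X 0 = ∅)
    (hgreedy : ∀ t < s, ∃ j : G, X (t + 1) = insert j (X t) ∧
      ∀ j' : G, f (insert j' (X t)) - f (X t) ≤ f (insert j (X t)) - f (X t)) :
    (∀ t ≤ s, ∀ S : Finset G, S.card ≤ s →
      (1 - (1 - 1 / (s : ℝ)) ^ t) * f S ≤ f (X t)) ∧
    (∀ S : Finset G, S.card ≤ s →
      (1 - 1 / Real.exp 1) * f S ≤ f (X s)) :=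
  greedy_cardinality_guarantee_general f hmono hsub hf0 s X hX0 hgreedy
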